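/- Let ω be a weight satisfying conditions (W1) and (W2), and let a ∈ 𝔻 be fixed. Then there exists a constant c > 0 such that for all z ∈ 𝔻: (1/c) ω(z) ≤ ω(σ_a(z)) ≤ c ω(z), where σ_a(z) = (a − z)/(1 − ā z) is the Möbius transformation of 𝔻 interchanging 0 and a. -/

import Mathlib

open MeasureTheory Complex Metric Set Filter
open scoped ENNReal InnerProductSpace

noncomputable section

/-- The open unit disk in the complex plane. -/
def unitDisk : Set ℂ := Metric.ball 0 1

/-- The normalized area measure `dA` on `ℂ`. -/
def dA : Measure ℂ := (ENNReal.ofReal Real.pi)⁻¹ • volume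

/-- The radial extension of a function on `[0,1)` to the disk: `ω(z) = ω(|z|)`. -/
def radial (ω : ℝ → ℝ) (z : ℂ) : ℝ := ω ‖z‖

/-- A weight: a positive function on `[0,1)`, of class `C²`, integrable. -/
structure IsWeight (ω : ℝ → ℝ) : Prop where
  pos : ∀ r ∈ Set.Ico (0:ℝ) 1, 0 < ω r
  smooth : ContDiffOn ℝ 2 ω (Set.Ico (0:ℝ) 1)
  integrable : IntegrableOn ω (Set.Ico (0:ℝ) 1)

/-- An admissible weight: conditions (W1)–(W4). -/
structure IsAdmissibleWeight (ω : ℝ → ℝ) extends IsWeight ω : Prop where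
  W1 : AntitoneOn ω (Set.Ico (0:ℝ) 1)
  W2 : ∃ δ > (0:ℝ), MonotoneOn (fun r => ω r * (1 - r) ^ (-(1 + δ))) (Set.Ico (0:ℝ) 1)
  W3 : Tendsto ω (nhdsWithin 1 (Set.Iio 1)) (nhds 0)
  W4 : (ConvexOn ℝ (Set.Ico (0:ℝ) 1) ω ∧ Tendsto (deriv ω) (nhdsWithin 1 (Set.Iio 1)) (nhds 0))
        ∨ ConcaveOn ℝ (Set.Ico (0:ℝ) 1) ω

/-- The (L1) condition of Lusky. -/
def L1Condition (ω : ℝ → ℝ) : Prop :=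
  0 < ⨅ k : ℕ, ω (1 - 2 ^ (-(k:ℝ) - 1)) / ω (1 - 2 ^ (-(k:ℝ)))

/-- The generalized Nevanlinna counting function `N_{φ,ω}(z) = ∑_{a ∈ φ⁻¹(z)} ω(a)`. -/
def Nevanlinna (ω : ℝ → ℝ) (φ : ℂ → ℂ) (z : ℂ) : ℝ :=
  ∑' a : {w : ℂ // w ∈ unitDisk ∧ φ w = z}, radial ω (a : ℂ)

/-- Membership in the weighted Hilbert space `H_ω`. -/
def memHω (ω : ℝ → ℝ) (f : ℂ → ℂ) : Prop :=
  DifferentiableOn ℂ f unitDisk ∧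
    IntegrableOn (fun z => ‖deriv f z‖ ^ 2 * radial ω z) unitDisk dA

/-- The squared norm on the weighted Hilbert space `H_ω`. -/
def HωNormSq (ω : ℝ → ℝ) (f : ℂ → ℂ) : ℝ :=
  ‖f 0‖ ^ 2 + ∫ z in unitDisk, ‖deriv f z‖ ^ 2 * radial ω z ∂dA

/-- Membership in the weighted Bergman space `A²_ω`. -/
def memAω (ω : ℝ → ℝ) (f : ℂ → ℂ) : Prop :=
  DifferentiableOn ℂ f unitDisk ∧
    IntegrableOn (fun z => ‖f z‖ ^ 2 * radial ω z) unitDisk dA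

/-- The squared norm on the weighted Bergman space `A²_ω`. -/
def AωNormSq (ω : ℝ → ℝ) (f : ℂ → ℂ) : ℝ :=
  ∫ z in unitDisk, ‖f z‖ ^ 2 * radial ω z ∂dA

/-- `ω_n`: with `ω_0 = 1` and `ω_n = 2 n² ∫₀¹ r^{2n-1} ω(r) dr` for `n ≥ 1`. -/
def ωSeq (ω : ℝ → ℝ) (n : ℕ) : ℝ :=
  if n = 0 then 1 else 2 * (n:ℝ) ^ 2 * ∫ r in (0:ℝ)..1, r ^ (2 * n - 1) * ω r

/-- `p_n = 2 ∫₀¹ r^{2n+1} ω(r) dr`. -/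
def pSeq (ω : ℝ → ℝ) (n : ℕ) : ℝ := 2 * ∫ r in (0:ℝ)..1, r ^ (2 * n + 1) * ω r

/-- The filter of `z ∈ ℂ` with `|z| → 1⁻`. -/
def boundaryFilter : Filter ℂ := Filter.comap (fun z : ℂ => ‖z‖) (nhdsWithin 1 (Set.Iio 1))

/-- The Möbius transformation `σ_a(z) = (a - z)/(1 - ā z)`. -/
def mobius (a z : ℂ) : ℂ := (a - z) / (1 - (starRingEnd ℂ) a * z)

/-- The pseudohyperbolic disk `Δ(a,r)`. -/
def pseudoDisk (a : ℂ) (r : ℝ) : Set ℂ := {z ∈ unitDisk | ‖mobius a z‖ < r}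

/-- The hyperbolic measure `dλ(z) = (1-|z|²)⁻² dA(z)`. -/
def hyperbolicMeasure : Measure ℂ :=
  dA.withDensity fun z => ENNReal.ofReal (((1 - ‖z‖ ^ 2) ^ 2)⁻¹)

/-- The essential norm of an operator: its distance to the compact operators. -/
def essNorm {H : Type} [NormedAddCommGroup H] [InnerProductSpace ℂ H] (T : H →L[ℂ] H) : ℝ :=
  sInf {r : ℝ | ∃ K : H →L[ℂ] H, IsCompactOperator ⇑K ∧ r = ‖T - K‖}

/-- A Hilbert–Schmidt operator: `∑ ‖T eₙ‖² < ∞` for every orthonormal basis. -/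
def IsHilbertSchmidt {H : Type} [NormedAddCommGroup H] [InnerProductSpace ℂ H]
    (T : H →L[ℂ] H) : Prop :=
  ∀ (I : Type) (b : HilbertBasis I ℂ H), Summable fun i => ‖T (b i)‖ ^ 2

/-- The `n`-th approximation number of `T` (equal to the `n`-th singular value). -/
def approxNumber {H : Type} [NormedAddCommGroup H] [InnerProductSpace ℂ H]
    (T : H →L[ℂ] H) (n : ℕ) : ℝ :=
  sInf {r : ℝ | ∃ F : H →L[ℂ] H, Module.rank ℂ (LinearMap.range (F : H →ₗ[ℂ] H)) ≤ n ∧ r = ‖T - F‖}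

/-- Membership in the Schatten class `S_p`: `T` is compact with `p`-summable singular values. -/
def MemSchatten {H : Type} [NormedAddCommGroup H] [InnerProductSpace ℂ H]
    (p : ℝ) (T : H →L[ℂ] H) : Prop :=
  IsCompactOperator ⇑T ∧ Summable fun n => approxNumber T n ^ p

/-! Put `K = 2(1+|a|)/(1-|a|)`. The identity `(1 - |σ_a z|²) |1 - ā z|² = (1 - |a|²)(1 - |z|²)`
and `|1 - ā z| ≥ 1 - |a|` give `1 - |σ_a z| ≤ K (1 - |z|)`; as `σ_a` is an involution of the disk,
also `1 - |z| ≤ K (1 - |σ_a z|)`. By (W1) and (W2), `ω` decreases, but no faster than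
`(1 - r)^{1+δ}`, so `1 - s ≤ K (1 - r)` forces `ω s ≤ K^{1+δ} ω r`. -/

open ComplexConjugate

theorem mem_unitDisk {z : ℂ} : z ∈ unitDisk ↔ ‖z‖ < 1 := mem_ball_zero_iff

theorem norm_mem_Ico_of_mem_unitDisk {z : ℂ} (hz : z ∈ unitDisk) : ‖z‖ ∈ Ico (0 : ℝ) 1 :=
  ⟨norm_nonneg z, mem_unitDisk.mp hz⟩

theorem sq_norm_one_sub_conj_mul_sub_sq_norm_sub (a z : ℂ) :
    ‖1 - conj a * z‖ ^ 2 - ‖a - z‖ ^ 2 = (1 - ‖a‖ ^ 2) * (1 - ‖z‖ ^ 2) := by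
  simp only [← Complex.normSq_eq_norm_sq, Complex.normSq_apply, Complex.sub_re, Complex.sub_im,
    Complex.one_re, Complex.one_im, Complex.mul_re, Complex.mul_im, Complex.conj_re,
    Complex.conj_im]
  ring

theorem one_sub_sq_norm_mobius {a z : ℂ} (h : 1 - conj a * z ≠ 0) :
    1 - ‖mobius a z‖ ^ 2 = (1 - ‖a‖ ^ 2) * (1 - ‖z‖ ^ 2) / ‖1 - conj a * z‖ ^ 2 := by
  rw [← sq_norm_one_sub_conj_mul_sub_sq_norm_sub, mobius, norm_div, div_pow, sub_div,
    div_self (by positivity)]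

theorem one_sub_norm_le_norm_one_sub_conj_mul (a : ℂ) {z : ℂ} (hz : ‖z‖ ≤ 1) :
    1 - ‖a‖ ≤ ‖1 - conj a * z‖ := by
  have haz : ‖conj a * z‖ ≤ ‖a‖ := by
    simpa [norm_mul] using mul_le_mul_of_nonneg_left hz (norm_nonneg a)
  linarith [norm_sub_norm_le (1 : ℂ) (conj a * z), norm_one (α := ℂ)]

theorem one_sub_conj_mul_ne_zero {a z : ℂ} (ha : a ∈ unitDisk) (hz : z ∈ unitDisk) :
    1 - conj a * z ≠ 0 := by
  have h := one_sub_norm_le_norm_one_sub_conj_mul a (mem_unitDisk.mp hz).le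
  exact norm_pos_iff.mp (by linarith [mem_unitDisk.mp ha])

theorem mobius_mem_unitDisk {a z : ℂ} (ha : a ∈ unitDisk) (hz : z ∈ unitDisk) :
    mobius a z ∈ unitDisk := by
  have hA := mem_unitDisk.mp ha
  have hZ := mem_unitDisk.mp hz
  have hpos : 0 < (1 - ‖a‖ ^ 2) * (1 - ‖z‖ ^ 2) / ‖1 - conj a * z‖ ^ 2 := by
    have := norm_pos_iff.mpr (one_sub_conj_mul_ne_zero ha hz)
    apply div_pos (mul_pos _ _) (by positivity) <;> nlinarith [norm_nonneg a, norm_nonneg z]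
  rw [← one_sub_sq_norm_mobius (one_sub_conj_mul_ne_zero ha hz)] at hpos
  rw [mem_unitDisk]
  nlinarith [norm_nonneg (mobius a z)]

theorem mobius_mobius {a z : ℂ} (ha : ‖a‖ ≠ 1) (hz : 1 - conj a * z ≠ 0) :
    mobius a (mobius a z) = z := by
  have ha' : 1 - conj a * a ≠ 0 := by
    rw [Complex.conj_mul', sub_ne_zero, ne_comm]
    exact_mod_cast (pow_eq_one_iff_of_nonneg (norm_nonneg a) two_ne_zero).not.mpr ha
  have hnum : a - mobius a z = z * (1 - conj a * a) / (1 - conj a * z) := by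
    rw [eq_div_iff hz, sub_mul, mobius, div_mul_cancel₀ _ hz]
    ring
  have hden : 1 - conj a * mobius a z = (1 - conj a * a) / (1 - conj a * z) := by
    rw [eq_div_iff hz, sub_mul, mobius, mul_assoc, div_mul_cancel₀ _ hz]
    ring
  rw [mobius, hnum, hden, div_div_div_cancel_right₀ hz, mul_div_cancel_right₀ _ ha']

theorem one_sub_norm_mobius_le {a z : ℂ} (ha : a ∈ unitDisk) (hz : z ∈ unitDisk) :
    1 - ‖mobius a z‖ ≤ 2 * (1 + ‖a‖) / (1 - ‖a‖) * (1 - ‖z‖) := by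
  have hA := mem_unitDisk.mp ha
  have hZ := mem_unitDisk.mp hz
  have hS := mem_unitDisk.mp (mobius_mem_unitDisk ha hz)
  have h1A : 0 < 1 - ‖a‖ := by linarith
  calc 1 - ‖mobius a z‖ ≤ 1 - ‖mobius a z‖ ^ 2 := by nlinarith [norm_nonneg (mobius a z)]
    _ = (1 - ‖a‖ ^ 2) * (1 - ‖z‖ ^ 2) / ‖1 - conj a * z‖ ^ 2 :=
        one_sub_sq_norm_mobius (one_sub_conj_mul_ne_zero ha hz)
    _ ≤ (1 - ‖a‖ ^ 2) * (1 - ‖z‖ ^ 2) / (1 - ‖a‖) ^ 2 := by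
        have := one_sub_norm_le_norm_one_sub_conj_mul a hZ.le
        have : 0 ≤ (1 - ‖a‖ ^ 2) * (1 - ‖z‖ ^ 2) := by
          apply mul_nonneg <;> nlinarith [norm_nonneg a, norm_nonneg z]
        gcongr
    _ = (1 + ‖a‖) / (1 - ‖a‖) * ((1 + ‖z‖) * (1 - ‖z‖)) := by
        field_simp
        ring
    _ ≤ (1 + ‖a‖) / (1 - ‖a‖) * (2 * (1 - ‖z‖)) := by
        gcongr
        linarith
    _ = 2 * (1 + ‖a‖) / (1 - ‖a‖) * (1 - ‖z‖) := by ring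

theorem le_rpow_mul_of_one_sub_le {ω : ℝ → ℝ} {p K r s : ℝ}
    (hω : ∀ r ∈ Ico (0 : ℝ) 1, 0 ≤ ω r) (hanti : AntitoneOn ω (Ico 0 1)) (hp : 0 ≤ p)
    (hmono : MonotoneOn (fun r => ω r * (1 - r) ^ (-p)) (Ico 0 1)) (hK : 1 ≤ K)
    (hr : r ∈ Ico (0 : ℝ) 1) (hs : s ∈ Ico (0 : ℝ) 1) (h : 1 - s ≤ K * (1 - r)) :
    ω s ≤ K ^ p * ω r := by
  rcases le_total r s with hrs | hsr
  · calc ω s ≤ ω r := hanti hr hs hrs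
      _ ≤ K ^ p * ω r := le_mul_of_one_le_left (hω r hr) (Real.one_le_rpow hK hp)
  · have h1r : 0 < 1 - r := by linarith [hr.2]
    have h1s : 0 < 1 - s := by linarith [hs.2]
    calc ω s = ω s * (1 - s) ^ (-p) * (1 - s) ^ p := by
          rw [Real.rpow_neg h1s.le, mul_assoc, inv_mul_cancel₀ (by positivity), mul_one]
      _ ≤ ω r * (1 - r) ^ (-p) * (1 - s) ^ p :=
          mul_le_mul_of_nonneg_right (hmono hs hr hsr) (by positivity)
      _ ≤ ω r * (1 - r) ^ (-p) * (K * (1 - r)) ^ p := by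
          have := hω r hr
          gcongr
      _ = K ^ p * ω r := by
          rw [Real.mul_rpow (by linarith) h1r.le, Real.rpow_neg h1r.le]
          field_simp

/-- If `ω` satisfies (W1) and (W2) and `a ∈ 𝔻`, then
`(1/c) ω(z) ≤ ω(σ_a(z)) ≤ c ω(z)` for all `z ∈ 𝔻`, for some `c > 0`. -/
theorem weight_mobius_invariance
    (ω : ℝ → ℝ) (hω : IsWeight ω)
    (hW1 : AntitoneOn ω (Set.Ico (0:ℝ) 1))
    (hW2 : ∃ δ > (0:ℝ), MonotoneOn (fun r => ω r * (1 - r) ^ (-(1 + δ))) (Set.Ico (0:ℝ) 1))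
    (a : ℂ) (ha : a ∈ unitDisk) :
    ∃ c > (0:ℝ), ∀ z ∈ unitDisk,
      (1 / c) * radial ω z ≤ radial ω (mobius a z) ∧
      radial ω (mobius a z) ≤ c * radial ω z := by
  obtain ⟨δ, hδ, hmono⟩ := hW2
  have hA := mem_unitDisk.mp ha
  have hK : 1 ≤ 2 * (1 + ‖a‖) / (1 - ‖a‖) := by
    rw [le_div_iff₀ (by linarith)]
    linarith [norm_nonneg a]
  have hcomp {r s : ℝ} := le_rpow_mul_of_one_sub_le (r := r) (s := s)
    (fun r hr => (hω.pos r hr).le) hW1 (by linarith) hmono hK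
  refine ⟨(2 * (1 + ‖a‖) / (1 - ‖a‖)) ^ (1 + δ), by positivity, fun z hz => ⟨?_, ?_⟩⟩
  · have hσz := mobius_mem_unitDisk ha hz
    have h := one_sub_norm_mobius_le ha hσz
    rw [mobius_mobius hA.ne (one_sub_conj_mul_ne_zero ha hz)] at h
    rw [one_div, inv_mul_le_iff₀ (by positivity)]
    exact hcomp (norm_mem_Ico_of_mem_unitDisk hσz) (norm_mem_Ico_of_mem_unitDisk hz) h
  · exact hcomp (norm_mem_Ico_of_mem_unitDisk hz)
      (norm_mem_Ico_of_mem_unitDisk (mobius_mem_unitDisk ha hz)) (one_sub_norm_mobius_le ha hz)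

end
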